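/- arXiv:1604.07182 — 2 statements merged into one kernel-verified Lean document; each statement's English description precedes it below -/
import Mathlib

section
/- Let X_1,...,X_n be independent Bernoulli random variables, X = ∑ X_i and μ = E[X]. Then Pr[X ≤ μ/2] ≤ (e/2)^{-μ/2} ≤ e^{-μ/8}. -/
open MeasureTheory ProbabilityTheory Real

/-! Exponential moment method at `t = -log 2`: by convexity `exp (t x) ≤ 1 + (eᵗ - 1) x` on
`[0, 1]`, so each summand has `mgf ≤ exp ((eᵗ - 1) pᵢ)`, independence multiplies these into
`exp ((eᵗ - 1) μ)`, and Markov's inequality for `exp (t X)` gives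
`exp (-t μ / 2 + (eᵗ - 1) μ) = (e / 2) ^ (-μ / 2)`. The second inequality is
`1 - log 2 ≥ 1 / 4`. -/

lemma Real.exp_mul_le_one_add_mul {x : ℝ} (hx : x ∈ Set.Icc (0 : ℝ) 1) (t : ℝ) :
    exp (t * x) ≤ 1 + (exp t - 1) * x := by
  calc exp (t * x) = exp ((1 - x) * 0 + x * t) := by ring_nf
    _ ≤ (1 - x) * exp 0 + x * exp t :=
        convexOn_exp.2 (Set.mem_univ _) (Set.mem_univ _) (by linarith [hx.2]) hx.1 (by ring)
    _ = 1 + (exp t - 1) * x := by rw [exp_zero]; ring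

lemma Real.rpow_exp_one_div_two_neg_le {μ : ℝ} (hμ : 0 ≤ μ) :
    (exp 1 / 2) ^ (-μ / 2) ≤ exp (-μ / 8) := by
  rw [rpow_def_of_pos (by positivity), log_div (exp_ne_zero 1) two_ne_zero, log_exp, exp_le_exp]
  nlinarith [log_two_lt_d9]

namespace ProbabilityTheory

variable {Ω ι : Type*} {m : MeasurableSpace Ω} {P : Measure Ω}

lemma mgf_le_exp_of_mem_Icc [IsProbabilityMeasure P] {X : Ω → ℝ} (hX : AEMeasurable X P)
    (h01 : ∀ᵐ ω ∂P, X ω ∈ Set.Icc (0 : ℝ) 1) (t : ℝ) :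
    mgf X P t ≤ exp ((exp t - 1) * P[X]) := by
  have hint : Integrable X P := .of_mem_Icc 0 1 hX h01
  calc mgf X P t ≤ ∫ ω, 1 + (exp t - 1) * X ω ∂P := by
        refine integral_mono_ae (integrable_exp_mul_of_mem_Icc hX h01)
          ((integrable_const 1).add (hint.const_mul _)) ?_
        filter_upwards [h01] with ω hω using exp_mul_le_one_add_mul hω t
    _ = (exp t - 1) * P[X] + 1 := by
        rw [integral_add (integrable_const 1) (hint.const_mul _), integral_const_mul]
        simp [add_comm]
    _ ≤ exp ((exp t - 1) * P[X]) := add_one_le_exp _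

variable {X : ι → Ω → ℝ}

lemma iIndepFun.mgf_sum_le_exp_of_mem_Icc (h_indep : iIndepFun X P)
    (h_meas : ∀ i, AEMeasurable (X i) P) (h01 : ∀ i, ∀ᵐ ω ∂P, X i ω ∈ Set.Icc (0 : ℝ) 1)
    (s : Finset ι) (t : ℝ) :
    mgf (fun ω ↦ ∑ i ∈ s, X i ω) P t ≤ exp ((exp t - 1) * ∫ ω, ∑ i ∈ s, X i ω ∂P) := by
  have := h_indep.isProbabilityMeasure
  rw [integral_finsetSum s fun i _ ↦ .of_mem_Icc 0 1 (h_meas i) (h01 i), ← Finset.sum_fn,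
    h_indep.mgf_sum₀ h_meas, Finset.mul_sum, exp_sum]
  exact Finset.prod_le_prod (fun i _ ↦ mgf_nonneg)
    fun i _ ↦ mgf_le_exp_of_mem_Icc (h_meas i) (h01 i) t

lemma iIndepFun.measureReal_sum_le_le_exp_of_mem_Icc (h_indep : iIndepFun X P)
    (h_meas : ∀ i, AEMeasurable (X i) P) (h01 : ∀ i, ∀ᵐ ω ∂P, X i ω ∈ Set.Icc (0 : ℝ) 1)
    (s : Finset ι) {t : ℝ} (ht : t ≤ 0) (a : ℝ) :
    P.real {ω | ∑ i ∈ s, X i ω ≤ a} ≤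
      exp (-t * a + (exp t - 1) * ∫ ω, ∑ i ∈ s, X i ω ∂P) := by
  have := h_indep.isProbabilityMeasure
  have h_sum : ∀ᵐ ω ∂P, ∑ i ∈ s, X i ω ∈ Set.Icc (0 : ℝ) s.card := by
    filter_upwards [(Filter.eventually_all_finset s).2 fun i _ ↦ h01 i] with ω hω
    refine ⟨Finset.sum_nonneg fun i hi ↦ (hω i hi).1, ?_⟩
    simpa using Finset.sum_le_card_nsmul s _ 1 fun i hi ↦ (hω i hi).2
  calc P.real {ω | ∑ i ∈ s, X i ω ≤ a}
      ≤ exp (-t * a) * mgf (fun ω ↦ ∑ i ∈ s, X i ω) P t :=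
        measure_le_le_exp_mul_mgf a ht
          (integrable_exp_mul_of_mem_Icc (Finset.aemeasurable_fun_sum s fun i _ ↦ h_meas i) h_sum)
    _ ≤ exp (-t * a) * exp ((exp t - 1) * ∫ ω, ∑ i ∈ s, X i ω ∂P) := by
        gcongr; exact h_indep.mgf_sum_le_exp_of_mem_Icc h_meas h01 s t
    _ = _ := (exp_add _ _).symm

lemma iIndepFun.measureReal_sum_le_half_integral_le (h_indep : iIndepFun X P)
    (h_meas : ∀ i, AEMeasurable (X i) P) (h01 : ∀ i, ∀ᵐ ω ∂P, X i ω ∈ Set.Icc (0 : ℝ) 1)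
    (s : Finset ι) :
    P.real {ω | ∑ i ∈ s, X i ω ≤ (∫ ω, ∑ i ∈ s, X i ω ∂P) / 2} ≤
      (exp 1 / 2) ^ (-(∫ ω, ∑ i ∈ s, X i ω ∂P) / 2) := by
  have hlog2 : -log 2 ≤ 0 := neg_nonpos.2 (log_nonneg one_le_two)
  convert h_indep.measureReal_sum_le_le_exp_of_mem_Icc h_meas h01 s hlog2 _ using 1
  rw [rpow_def_of_pos (by positivity), log_div (exp_ne_zero 1) two_ne_zero, log_exp, exp_neg,
    exp_log two_pos]
  ring_nf

end ProbabilityTheory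

theorem chernoff_lower_tail_general {Ω : Type*} [MeasureSpace Ω]
    (n : ℕ) (X : Fin n → Ω → ℝ)
    (hmeas : ∀ i, Measurable (X i))
    (hindep : iIndepFun X ℙ)
    (hBern : ∀ i ω, X i ω = 0 ∨ X i ω = 1)
    (μ : ℝ) (hμ : μ = ∫ ω, (∑ i, X i ω) ∂ℙ) :
    ℙ {ω | ∑ i, X i ω ≤ μ / 2} ≤ ENNReal.ofReal ((Real.exp 1 / 2) ^ (-μ / 2)) ∧
      (Real.exp 1 / 2) ^ (-μ / 2) ≤ Real.exp (-μ / 8) := by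
  have h01 : ∀ i ω, X i ω ∈ Set.Icc (0 : ℝ) 1 := fun i ω ↦ by
    rcases hBern i ω with h | h <;> simp [h]
  have hμ_nonneg : 0 ≤ μ := hμ ▸ integral_nonneg fun ω ↦ Finset.sum_nonneg fun i _ ↦ (h01 i ω).1
  refine ⟨?_, rpow_exp_one_div_two_neg_le hμ_nonneg⟩
  have := hindep.isProbabilityMeasure
  rw [← ofReal_measureReal, hμ]
  exact ENNReal.ofReal_le_ofReal <| hindep.measureReal_sum_le_half_integral_le
    (fun i ↦ (hmeas i).aemeasurable) (fun i ↦ ae_of_all _ (h01 i)) Finset.univ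

/-- Chernoff lower-tail bound: for independent Bernoulli random variables
`X 1, ..., X n` with `X = ∑ X i` and `μ = E[X]`, we have
`Pr[X ≤ μ/2] ≤ (e/2)^{-μ/2} ≤ e^{-μ/8}`. -/
theorem chernoff_lower_tail {Ω : Type*} [MeasureSpace Ω]
    [IsProbabilityMeasure (ℙ : Measure Ω)]
    (n : ℕ) (X : Fin n → Ω → ℝ)
    (hmeas : ∀ i, Measurable (X i))
    (hindep : iIndepFun X ℙ)
    (hBern : ∀ i ω, X i ω = 0 ∨ X i ω = 1)
    (μ : ℝ) (hμ : μ = ∫ ω, (∑ i, X i ω) ∂ℙ) :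
    ℙ {ω | ∑ i, X i ω ≤ μ / 2} ≤ ENNReal.ofReal ((Real.exp 1 / 2) ^ (-μ / 2)) ∧
      (Real.exp 1 / 2) ^ (-μ / 2) ≤ Real.exp (-μ / 8) :=
  chernoff_lower_tail_general n X hmeas hindep hBern μ hμ
end

section
/- Consider a round in which a dominator v receives a message with probability at most P in each of Γ = γ₁·ln n independent rounds, where P < ω₁/(4γ₁) for constants ω₁, γ₁ > 0 with ω₁ ≥ 36. Then the probability that v receives at least ω₁·ln n messages over the Γ rounds is at most e^{-(ω₁/12) ln n} ≤ n^{-3}. -/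
open MeasureTheory ProbabilityTheory Real

/-!
Exponential-moment (Chernoff) argument at parameter `t = 1`: each indicator has
`mgf ≤ exp (P (e - 1))`, so by independence and Markov's inequality the probability is at most
`exp (-ω₁ ln n + (e - 1) Γ P) ≤ exp (-ω₁ ln n + (ω₁ / 2) ln n)`, using `Γ P ≤ (ω₁ / 4) ln n`
and `e - 1 ≤ 2`. Finally `ω₁ / 12 ≥ 3`.
-/

namespace ProbabilityTheory

variable {Ω : Type*} {m : MeasurableSpace Ω} {μ : Measure Ω} [IsProbabilityMeasure μ]

lemma exp_mul_indicator_one (A : Set Ω) (t : ℝ) :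
    (fun ω => exp (t * A.indicator (fun _ => (1 : ℝ)) ω)) =
      fun ω => A.indicator (fun _ => exp t - 1) ω + 1 := by
  funext ω
  by_cases h : ω ∈ A <;> simp [h]

lemma mgf_indicator_one {A : Set Ω} (hA : MeasurableSet A) (t : ℝ) :
    mgf (A.indicator fun _ => (1 : ℝ)) μ t = μ.real A * (exp t - 1) + 1 := by
  rw [mgf, exp_mul_indicator_one, integral_add ((integrable_const _).indicator hA)
    (integrable_const 1), integral_indicator_const _ hA]
  simp

lemma mgf_indicator_one_le {A : Set Ω} (hA : MeasurableSet A) {p t : ℝ} (ht : 0 ≤ t)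
    (hp : μ.real A ≤ p) :
    mgf (A.indicator fun _ => (1 : ℝ)) μ t ≤ exp (p * (exp t - 1)) := by
  have hexp : 0 ≤ exp t - 1 := by linarith [one_le_exp ht]
  calc mgf (A.indicator fun _ => (1 : ℝ)) μ t = μ.real A * (exp t - 1) + 1 :=
        mgf_indicator_one hA t
    _ ≤ p * (exp t - 1) + 1 := by gcongr
    _ ≤ exp (p * (exp t - 1)) := by linarith [add_one_le_exp (p * (exp t - 1))]

lemma measureReal_sum_indicator_ge_le_exp {ι : Type*} [Fintype ι] {A : ι → Set Ω}
    (hA : ∀ i, MeasurableSet (A i)) (hindep : iIndepSet A μ) {p t : ℝ} (ht : 0 ≤ t)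
    (hp : ∀ i, μ.real (A i) ≤ p) (a : ℝ) :
    μ.real {ω | a ≤ ∑ i, (A i).indicator (fun _ => (1 : ℝ)) ω} ≤
      exp (-t * a + Fintype.card ι * p * (exp t - 1)) := by
  set X : ι → Ω → ℝ := fun i => (A i).indicator fun _ => 1
  have hXmeas : ∀ i, Measurable (X i) := fun i => measurable_const.indicator (hA i)
  have hXindep : iIndepFun X μ := hindep.iIndepFun_indicator
  have hint : Integrable (fun ω => exp (t * (∑ i, X i) ω)) μ :=
    hXindep.integrable_exp_mul_sum hXmeas fun i _ => by
      rw [exp_mul_indicator_one]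
      exact ((integrable_const _).indicator (hA i)).add (integrable_const 1)
  have hmgf : mgf (∑ i, X i) μ t ≤ exp (Fintype.card ι * p * (exp t - 1)) :=
    calc mgf (∑ i, X i) μ t = ∏ i, mgf (X i) μ t := hXindep.mgf_sum hXmeas _
      _ ≤ ∏ _i : ι, exp (p * (exp t - 1)) :=
          Finset.prod_le_prod (fun _ _ => mgf_nonneg)
            fun i _ => mgf_indicator_one_le (hA i) ht (hp i)
      _ = exp (Fintype.card ι * p * (exp t - 1)) := by
          rw [Finset.prod_const, ← exp_nat_mul, Finset.card_univ, mul_assoc]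
  calc μ.real {ω | a ≤ ∑ i, X i ω}
      = μ.real {ω | a ≤ (∑ i, X i) ω} := by simp only [Finset.sum_apply]
    _ ≤ exp (-t * a) * mgf (∑ i, X i) μ t := measure_ge_le_exp_mul_mgf a ht hint
    _ ≤ exp (-t * a) * exp (Fintype.card ι * p * (exp t - 1)) := by gcongr
    _ = exp (-t * a + Fintype.card ι * p * (exp t - 1)) := (exp_add _ _).symm

end ProbabilityTheory

/-- First part of Lemma 8 (CSA termination): over `Γ ≤ γ₁·ln n` independent
rounds, each delivering a message with probability at most `P < ω₁/(4γ₁)`, the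
probability of receiving at least `ω₁·ln n` messages is at most
`e^{-(ω₁/12)·ln n} ≤ n^{-3}`. -/
theorem csa_few_messages {Ω : Type*} [MeasureSpace Ω]
    [IsProbabilityMeasure (ℙ : Measure Ω)]
    (n : ℕ) (hn : 2 ≤ n) (ω₁ γ₁ P : ℝ) (hω₁ : 36 ≤ ω₁) (hγ₁ : 0 < γ₁)
    (hP0 : 0 ≤ P) (hP : P < ω₁ / (4 * γ₁))
    (Γ : ℕ) (hΓ : (Γ : ℝ) ≤ γ₁ * Real.log n)
    (A : Fin Γ → Set Ω) (hmeas : ∀ i, MeasurableSet (A i))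
    (hindep : iIndepSet A ℙ)
    (hprob : ∀ i, ℙ (A i) ≤ ENNReal.ofReal P) :
    ℙ {ω | ω₁ * Real.log n ≤ ∑ i, (A i).indicator (fun _ => (1 : ℝ)) ω} ≤
      ENNReal.ofReal (Real.exp (-(ω₁ / 12) * Real.log n)) ∧
    Real.exp (-(ω₁ / 12) * Real.log n) ≤ (n : ℝ) ^ (-3 : ℝ) := by
  have hlog : 0 < Real.log n := Real.log_pos (by exact_mod_cast hn)
  have hΓP : (Γ : ℝ) * P ≤ ω₁ / 4 * Real.log n :=
    calc (Γ : ℝ) * P ≤ γ₁ * Real.log n * (ω₁ / (4 * γ₁)) := by gcongr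
      _ = ω₁ / 4 * Real.log n := by field_simp
  have he : exp 1 - 1 ≤ 2 := by linarith [exp_one_lt_d9]
  have hchernoff := measureReal_sum_indicator_ge_le_exp hmeas hindep zero_le_one
    (fun i => ENNReal.toReal_le_of_le_ofReal hP0 (hprob i)) (ω₁ * Real.log n)
  rw [Fintype.card_fin] at hchernoff
  constructor
  · rw [← ofReal_measureReal]
    refine ENNReal.ofReal_le_ofReal (hchernoff.trans (exp_le_exp.mpr ?_))
    have : (Γ : ℝ) * P * (exp 1 - 1) ≤ ω₁ / 4 * Real.log n * 2 := by
      gcongr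
      linarith [one_le_exp zero_le_one]
    nlinarith
  · rw [rpow_def_of_pos (by positivity), exp_le_exp]
    nlinarith
end
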